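/- arXiv:1707.01762 — 2 statements merged into one kernel-verified Lean document; each statement's English description precedes it below -/
import Mathlib

section
/- Let f: Ω → ℝ be α-Hölder and suppose λ > 0 and a strictly positive α-Hölder function h satisfy L_f h = λ h. Then for every shift-invariant Borel probability measure μ on Ω, h^s(μ) + ∫_Ω f dμ ≤ log λ. -/
/-!
Iterating the eigen-equation `L_f h = λ h` gives `∫ exp (S_n f (w y)) h (w y) dpⁿ(w) = λⁿ h y`
for the configuration `w y` obtained by prefixing the word `w` of length `n` to `y`; since `h`
is bounded below by some `c > 0`, the partition function `Z_n = ∫ exp (S_n f (w y)) dpⁿ(w)` is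
at most `λⁿ h y / c`. The Donsker–Varadhan inequality `∫ g dν - log ∫ exp g dpⁿ ≤ H(ν | pⁿ)`,
applied to the marginal `ν` of `μ` on the first `n` coordinates and to `g w = S_n f (w y)`,
bounds `H_{Λ_n}(μ)` by `log Z_n - ∫ g dν`. Hölder continuity makes `S_n f (w y)` differ from
`S_n f x` by a constant independent of `n` whenever `x` starts with `w`, and shift invariance
gives `∫ S_n f dμ = n ∫ f dμ`, so `H_{Λ_n}(μ) ≤ n (log λ - ∫ f dμ) + O(1)`.
-/

open MeasureTheory Filter
open scoped Classical

noncomputable section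

namespace Paper

variable {A : Type*} [MetricSpace A] [CompactSpace A] [MeasurableSpace A] [BorelSpace A]

/-- The left shift `σ` on `Ω = Aᴺ`. -/
def shift (x : ℕ → A) : ℕ → A := fun n => x (n + 1)

/-- Prepend a symbol: `cons a x = (a, x₀, x₁, …)`. -/
def cons (a : A) (x : ℕ → A) : ℕ → A := fun n =>
  match n with
  | 0 => a
  | n + 1 => x n

/-- The metric `d_Ω` on `Ω`. -/
def dOmega (x y : ℕ → A) : ℝ :=
  ∑' n : ℕ, (1 / 2 : ℝ) ^ (n + 1) * (dist (x n) (y n) / (1 + dist (x n) (y n)))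

/-- `f` is `α`-Hölder with respect to `d_Ω`. -/
def IsHolder (α : ℝ) (f : (ℕ → A) → ℝ) : Prop :=
  ∃ C : ℝ, 0 ≤ C ∧ ∀ x y, |f x - f y| ≤ C * dOmega x y ^ α

/-- The Ruelle transfer operator with a priori measure `p`. -/
def ruelle (p : Measure A) (f φ : (ℕ → A) → ℝ) : (ℕ → A) → ℝ :=
  fun x => ∫ a, Real.exp (f (cons a x)) * φ (cons a x) ∂p

/-- The normalized potential `f̄ = f + log h - log (h ∘ σ) - log λ`. -/
def fbar (f h : (ℕ → A) → ℝ) (lam : ℝ) : (ℕ → A) → ℝ :=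
  fun x => f x + Real.log (h x) - Real.log (h (shift x)) - Real.log lam

/-- Projection on the first `n` coordinates. -/
def proj (n : ℕ) (x : ℕ → A) : Fin n → A := fun i => x i

/-- Relative entropy `H(μ|ν)` of two measures, with value `+∞` unless
`μ ≪ ν` and the entropy integral is finite. -/
def relEnt {X : Type*} [MeasurableSpace X] (μ ν : Measure X) : EReal :=
  if μ ≪ ν ∧ Integrable (fun x => Real.log (μ.rnDeriv ν x).toReal) μ then
    ((∫ x, Real.log (μ.rnDeriv ν x).toReal ∂μ : ℝ) : EReal)
  else ⊤

/-- Relative entropy `H_{Λ_n}(μ|ν)` on the σ-algebra of the first `n` coordinates. -/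
def relEntN (n : ℕ) (μ ν : Measure (ℕ → A)) : EReal :=
  relEnt (μ.map (proj n)) (ν.map (proj n))

/-- The entropy `H_{Λ_n}(μ) = -H_{Λ_n}(μ | pᴺ)` relative to the a priori measure `p`. -/
def finEnt (p : Measure A) (μ : Measure (ℕ → A)) (n : ℕ) : EReal :=
  - relEnt (μ.map (proj n)) (Measure.pi fun _ : Fin n => p)

/-- The specific entropy `h^s(μ) = lim_n H_{Λ_n}(μ)/n` (defined as a `limsup`,
which coincides with the limit whenever the latter exists). -/
def specEnt (p : Measure A) (μ : Measure (ℕ → A)) : EReal :=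
  Filter.atTop.limsup fun n : ℕ => ((n : ℝ)⁻¹ : EReal) * finEnt p μ n

/-- Birkhoff sum `S_n(f)`. -/
def birkhoff (n : ℕ) (f : (ℕ → A) → ℝ) (x : ℕ → A) : ℝ :=
  ∑ i ∈ Finset.range n, f (shift^[i] x)

/-- The configuration `x_{Λ_n} y_{Λ_n^c}`. -/
def concatAt (n : ℕ) (x y : ℕ → A) : ℕ → A := fun i => if i < n then x i else y i

/-- Concatenation of a finite word with a configuration. -/
def wordCons (n : ℕ) (a : Fin n → A) (x : ℕ → A) : ℕ → A :=
  fun i => if h : i < n then a ⟨i, h⟩ else x (i - n)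

open Real Topology

section Sequences

variable {X : Type*}

lemma shift_iterate_apply (i : ℕ) (x : ℕ → X) (k : ℕ) : shift^[i] x k = x (k + i) := by
  induction i generalizing x with
  | zero => rfl
  | succ i ih => rw [Function.iterate_succ_apply, ih]; rfl

lemma birkhoff_succ_cons (n : ℕ) (f : (ℕ → X) → ℝ) (a : X) (x : ℕ → X) :
    birkhoff (n + 1) f (cons a x) = f (cons a x) + birkhoff n f x := by
  rw [birkhoff, Finset.sum_range_succ', add_comm]
  rfl

lemma wordCons_zero (w : Fin 0 → X) (y : ℕ → X) : wordCons 0 w y = y := by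
  funext i
  simp [wordCons]

lemma wordCons_succ (n : ℕ) (w : Fin (n + 1) → X) (y : ℕ → X) :
    wordCons (n + 1) w y = cons (w 0) (wordCons n (Fin.tail w) y) := by
  funext i
  rcases i with _ | i
  · simp [wordCons, cons]
  · by_cases hi : i < n
    · simp [wordCons, cons, hi, Fin.tail]
    · simp [wordCons, cons, hi]

lemma wordCons_proj_of_lt {n k : ℕ} (hk : k < n) (x y : ℕ → X) :
    wordCons n (proj n x) y k = x k := by
  simp [wordCons, proj, hk]

lemma measurable_shift [MeasurableSpace X] : Measurable (shift : (ℕ → X) → ℕ → X) :=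
  measurable_pi_lambda _ fun n => measurable_pi_apply (n + 1)

lemma measurable_proj [MeasurableSpace X] (n : ℕ) : Measurable (proj n : (ℕ → X) → Fin n → X) :=
  measurable_pi_lambda _ fun _ => measurable_pi_apply _

variable [TopologicalSpace X]

lemma continuous_shift : Continuous (shift : (ℕ → X) → ℕ → X) :=
  continuous_pi fun n => continuous_apply (n + 1)

lemma continuous_wordCons (n : ℕ) (y : ℕ → X) : Continuous fun w : Fin n → X => wordCons n w y := by
  refine continuous_pi fun i => ?_
  by_cases hi : i < n
  · simpa only [wordCons, dif_pos hi] using continuous_apply _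
  · simpa only [wordCons, dif_neg hi] using continuous_const

lemma continuous_birkhoff {f : (ℕ → X) → ℝ} (hf : Continuous f) (n : ℕ) :
    Continuous (birkhoff n f) :=
  continuous_finsetSum _ fun i _ => hf.comp (continuous_shift.iterate i)

end Sequences

section Metric

variable {X : Type*} [MetricSpace X]

lemma dOmega_summand_le (x y : ℕ → X) (n : ℕ) :
    (1 / 2 : ℝ) ^ (n + 1) * (dist (x n) (y n) / (1 + dist (x n) (y n))) ≤ (1 / 2) ^ (n + 1) :=
  mul_le_of_le_one_right (by positivity)
    (div_le_one_of_le₀ (by linarith [dist_nonneg (x := x n) (y := y n)]) (by positivity))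

lemma summable_half_pow_succ : Summable fun n : ℕ => (1 / 2 : ℝ) ^ (n + 1) :=
  (summable_nat_add_iff 1).2 summable_geometric_two

lemma summable_dOmega_summand (x y : ℕ → X) :
    Summable fun n => (1 / 2 : ℝ) ^ (n + 1) * (dist (x n) (y n) / (1 + dist (x n) (y n))) :=
  summable_half_pow_succ.of_nonneg_of_le (fun _ => by positivity) (dOmega_summand_le x y)

lemma dOmega_nonneg (x y : ℕ → X) : 0 ≤ dOmega x y :=
  tsum_nonneg fun _ => by positivity

lemma continuous_dOmega (x : ℕ → X) : Continuous (dOmega x) := by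
  refine continuous_tsum (fun n => ?_) summable_half_pow_succ fun n y => ?_
  · have hd : Continuous fun y : ℕ → X => dist (x n) (y n) :=
      continuous_const.dist (continuous_apply n)
    exact continuous_const.mul (hd.div (continuous_const.add hd) fun y => by positivity)
  · rw [Real.norm_of_nonneg (by positivity)]
    exact dOmega_summand_le x y n

lemma dOmega_le_of_forall_lt_eq {x y : ℕ → X} {m : ℕ} (hxy : ∀ k < m, x k = y k) :
    dOmega x y ≤ (1 / 2) ^ m := by
  rw [dOmega, ← (summable_dOmega_summand x y).sum_add_tsum_nat_add m,
    Finset.sum_eq_zero fun k hk => by simp [hxy k (Finset.mem_range.1 hk)], zero_add]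
  calc ∑' n, (1 / 2 : ℝ) ^ (n + m + 1) *
        (dist (x (n + m)) (y (n + m)) / (1 + dist (x (n + m)) (y (n + m))))
      ≤ ∑' n, (1 / 2 : ℝ) ^ m * (1 / 2) * (1 / 2) ^ n := by
        refine ((summable_nat_add_iff m).2 (summable_dOmega_summand x y)).tsum_le_tsum
          (fun n => (dOmega_summand_le x y (n + m)).trans_eq (by ring)) ?_
        exact summable_geometric_two.mul_left _
    _ = (1 / 2) ^ m := by rw [tsum_mul_left, tsum_geometric_two]; ring

lemma IsHolder.continuous {α : ℝ} (hα : 0 < α) {f : (ℕ → X) → ℝ} (hf : IsHolder α f) :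
    Continuous f := by
  obtain ⟨C, -, hC⟩ := hf
  refine continuous_iff_continuousAt.2 fun x => tendsto_iff_dist_tendsto_zero.2 ?_
  have hd : Tendsto (fun y => C * dOmega x y ^ α) (𝓝 x) (𝓝 0) := by
    have := ((continuous_dOmega x).tendsto x).rpow_const (Or.inr hα.le)
    simpa [dOmega, Real.zero_rpow hα.ne'] using this.const_mul C
  refine squeeze_zero (fun _ => dist_nonneg) (fun y => ?_) hd
  rw [Real.dist_eq, abs_sub_comm]
  exact hC x y

lemma IsHolder.exists_abs_birkhoff_sub_le {α : ℝ} (hα : 0 < α) {f : (ℕ → X) → ℝ}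
    (hf : IsHolder α f) :
    ∃ D, ∀ n (x z : ℕ → X), (∀ k < n, x k = z k) → |birkhoff n f x - birkhoff n f z| ≤ D := by
  obtain ⟨C, hC0, hC⟩ := hf
  set r : ℝ := (1 / 2) ^ α
  have hr0 : 0 < r := by positivity
  have hr1 : r < 1 := Real.rpow_lt_one (by norm_num) (by norm_num) hα
  refine ⟨C * (1 - r)⁻¹, fun n x z hxz => ?_⟩
  have hterm : ∀ i < n, |f (shift^[i] x) - f (shift^[i] z)| ≤ C * r ^ (n - 1 - i) := by
    intro i hi
    have hd : dOmega (shift^[i] x) (shift^[i] z) ≤ (1 / 2) ^ (n - 1 - i) :=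
      dOmega_le_of_forall_lt_eq fun k hk => by
        simp only [shift_iterate_apply]; exact hxz _ (by omega)
    calc |f (shift^[i] x) - f (shift^[i] z)| ≤ C * dOmega (shift^[i] x) (shift^[i] z) ^ α :=
          hC _ _
      _ ≤ C * ((1 / 2 : ℝ) ^ (n - 1 - i)) ^ α :=
          mul_le_mul_of_nonneg_left (Real.rpow_le_rpow (dOmega_nonneg _ _) hd hα.le) hC0
      _ = C * r ^ (n - 1 - i) := by rw [Real.rpow_pow_comm (by norm_num)]
  calc |birkhoff n f x - birkhoff n f z|
      = |∑ i ∈ Finset.range n, (f (shift^[i] x) - f (shift^[i] z))| := by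
        rw [birkhoff, birkhoff, Finset.sum_sub_distrib]
    _ ≤ ∑ i ∈ Finset.range n, C * r ^ (n - 1 - i) :=
        (Finset.abs_sum_le_sum_abs _ _).trans
          (Finset.sum_le_sum fun i hi => hterm i (Finset.mem_range.1 hi))
    _ = C * ∑ i ∈ Finset.range n, r ^ i := by
        rw [← Finset.mul_sum, Finset.sum_range_reflect (fun i => r ^ i) n]
    _ ≤ C * (1 - r)⁻¹ := by
        refine mul_le_mul_of_nonneg_left ?_ hC0
        have := geom_sum_Ico_le_of_lt_one (m := 0) (n := n) hr0.le hr1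
        rwa [← Finset.range_eq_Ico, pow_zero, one_div] at this

end Metric

lemma integral_birkhoff {X : Type*} [MeasurableSpace X] {μ : Measure (ℕ → X)}
    (hμ : MeasurePreserving shift μ μ) {f : (ℕ → X) → ℝ} (hf : Integrable f μ) (n : ℕ) :
    ∫ x, birkhoff n f x ∂μ = n * ∫ x, f x ∂μ := by
  have hinv : ∀ i, ∫ x, f (shift^[i] x) ∂μ = ∫ x, f x ∂μ := fun i => by
    have hf' : AEStronglyMeasurable f (μ.map shift^[i]) := by
      rw [(hμ.iterate i).map_eq]; exact hf.aestronglyMeasurable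
    rw [← integral_map (hμ.iterate i).measurable.aemeasurable hf', (hμ.iterate i).map_eq]
  have hint : ∀ i ∈ Finset.range n, Integrable (fun x => f (shift^[i] x)) μ :=
    fun i _ => (hμ.iterate i).integrable_comp_of_integrable hf
  simp only [birkhoff]
  rw [integral_finsetSum _ hint]
  simp [hinv]

section Entropy

variable {Y : Type*} [MeasurableSpace Y] {μ ν : Measure Y} [IsProbabilityMeasure μ]
  [IsProbabilityMeasure ν] {g : Y → ℝ}

/-- The Donsker–Varadhan variational inequality; it is Gibbs' inequality for `μ` against the
tilted measure `ν.tilted g`. -/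
theorem integral_sub_log_integral_exp_le_integral_llr (hμν : μ ≪ ν)
    (hllr : Integrable (llr μ ν) μ) (hgμ : Integrable g μ)
    (hgν : Integrable (fun y => exp (g y)) ν) :
    ∫ y, g y ∂μ - log (∫ y, exp (g y) ∂ν) ≤ ∫ y, llr μ ν y ∂μ := by
  have := isProbabilityMeasure_tilted hgν
  have hgibbs := InformationTheory.integral_llr_add_sub_measure_univ_nonneg
    (hμν.trans (absolutelyContinuous_tilted hgν)) (integrable_llr_tilted_right hμν hgμ hllr hgν)
  rw [integral_llr_tilted_right hμν hgμ hgν hllr] at hgibbs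
  simp only [probReal_univ] at hgibbs
  linarith

lemma integral_sub_log_integral_exp_le_relEnt (hgμ : Integrable g μ)
    (hgν : Integrable (fun y => exp (g y)) ν) :
    ((∫ y, g y ∂μ - log (∫ y, exp (g y) ∂ν) : ℝ) : EReal) ≤ relEnt μ ν := by
  unfold relEnt
  split_ifs with h
  · exact EReal.coe_le_coe_iff.2 (integral_sub_log_integral_exp_le_integral_llr h.1 h.2 hgμ hgν)
  · exact le_top

end Entropy

lemma limsup_inv_mul_le_of_le_affine {u : ℕ → EReal} {a b : ℝ}
    (hu : ∀ n, u n ≤ ((n * a + b : ℝ) : EReal)) :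
    limsup (fun n : ℕ => ((n : ℝ)⁻¹ : EReal) * u n) atTop ≤ a := by
  have hle : ∀ᶠ n : ℕ in atTop, ((n : ℝ)⁻¹ : EReal) * u n ≤ ((a + b / n : ℝ) : EReal) := by
    filter_upwards [eventually_ge_atTop 1] with n hn
    have hn : (0 : ℝ) < n := by exact_mod_cast hn
    calc ((n : ℝ)⁻¹ : EReal) * u n ≤ ((n : ℝ)⁻¹ : EReal) * ((n * a + b : ℝ) : EReal) :=
          mul_le_mul_of_nonneg_left (hu n) (EReal.coe_nonneg.2 (by positivity))
      _ = ((a + b / n : ℝ) : EReal) := by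
            rw [← EReal.coe_inv, ← EReal.coe_mul]; congr 1; field_simp
  have hlim : Tendsto (fun n : ℕ => a + b / n) atTop (𝓝 a) := by
    simpa using (tendsto_const_nhds (x := a)).add (tendsto_const_div_atTop_nhds_zero_nat b)
  replace hlim := EReal.tendsto_coe.2 hlim
  exact (limsup_le_limsup hle).trans hlim.limsup_eq.le

lemma _root_.Continuous.integrable_of_compactSpace {Y : Type*} [TopologicalSpace Y] [CompactSpace Y]
    [MeasurableSpace Y] [OpensMeasurableSpace Y] {μ : Measure Y} [IsFiniteMeasure μ]
    {g : Y → ℝ} (hg : Continuous g) : Integrable g μ :=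
  hg.integrable_of_hasCompactSupport (HasCompactSupport.of_compactSpace g)

lemma integral_exp_birkhoff_succ_cons_mul {X : Type*} [MeasurableSpace X] (p : Measure X)
    {f h : (ℕ → X) → ℝ} {lam : ℝ} (heig : ∀ x, ruelle p f h x = lam * h x) (n : ℕ)
    (z : ℕ → X) :
    ∫ a, exp (birkhoff (n + 1) f (cons a z)) * h (cons a z) ∂p
      = lam * (exp (birkhoff n f z) * h z) := by
  simp_rw [birkhoff_succ_cons, exp_add, mul_right_comm _ (exp (birkhoff n f z)),
    integral_mul_const]
  rw [show ∫ a, exp (f (cons a z)) * h (cons a z) ∂p = lam * h z from heig z]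
  ring

section Transfer

variable (p : Measure A) [IsProbabilityMeasure p] {f h : (ℕ → A) → ℝ} {lam : ℝ}

lemma integral_wordCons_succ {F : (ℕ → A) → ℝ} (hF : Continuous F) (n : ℕ) (y : ℕ → A) :
    ∫ w, F (wordCons (n + 1) w y) ∂(Measure.pi fun _ : Fin (n + 1) => p)
      = ∫ v, ∫ a, F (cons a (wordCons n v y)) ∂p ∂(Measure.pi fun _ : Fin n => p) := by
  have hmp := measurePreserving_piFinSuccAbove (fun _ : Fin (n + 1) => p) 0
  let G : A × (Fin n → A) → ℝ := fun q => F (cons q.1 (wordCons n q.2 y))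
  have hG : ∀ w, G (MeasurableEquiv.piFinSuccAbove (fun _ => A) 0 w) = F (wordCons (n + 1) w y) :=
    fun w => by simp only [G, wordCons_succ]; rfl
  have hGint : Integrable G (p.prod (Measure.pi fun _ : Fin n => p)) := by
    refine (hmp.integrable_comp_emb (MeasurableEquiv.measurableEmbedding _)).1 ?_
    simpa only [Function.comp_def, hG] using
      (hF.comp (continuous_wordCons _ y)).integrable_of_compactSpace
  simp_rw [← hG]
  rw [hmp.integral_comp' G, integral_prod_symm G hGint]

lemma integral_exp_birkhoff_mul_wordCons (hf : Continuous f) (hh : Continuous h)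
    (heig : ∀ x, ruelle p f h x = lam * h x) (n : ℕ) (y : ℕ → A) :
    ∫ w, exp (birkhoff n f (wordCons n w y)) * h (wordCons n w y)
      ∂(Measure.pi fun _ : Fin n => p) = lam ^ n * h y := by
  induction n with
  | zero => simp [birkhoff, wordCons_zero]
  | succ n ih =>
    rw [integral_wordCons_succ p (F := fun x => exp (birkhoff (n + 1) f x) * h x)
      ((continuous_birkhoff hf (n + 1)).rexp.mul hh)]
    simp_rw [integral_exp_birkhoff_succ_cons_mul p heig]
    rw [integral_const_mul, ih, pow_succ]
    ring

lemma log_integral_exp_birkhoff_wordCons_le (hf : Continuous f) (hh : Continuous h)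
    (hlam : 0 < lam) (heig : ∀ x, ruelle p f h x = lam * h x) {c : ℝ} (hc : 0 < c)
    (hch : ∀ x, c ≤ h x) (n : ℕ) (y : ℕ → A) :
    log (∫ w, exp (birkhoff n f (wordCons n w y)) ∂(Measure.pi fun _ : Fin n => p))
      ≤ n * log lam + log (h y / c) := by
  have hexp : Integrable (fun w => exp (birkhoff n f (wordCons n w y)))
      (Measure.pi fun _ : Fin n => p) :=
    ((continuous_birkhoff hf n).comp (continuous_wordCons n y)).rexp.integrable_of_compactSpace
  have hZ : c * ∫ w, exp (birkhoff n f (wordCons n w y)) ∂(Measure.pi fun _ : Fin n => p)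
      ≤ lam ^ n * h y := by
    rw [← integral_exp_birkhoff_mul_wordCons p hf hh heig n y, ← integral_const_mul]
    refine integral_mono (hexp.const_mul c) ?_ fun w => ?_
    · exact (((continuous_birkhoff hf n).comp (continuous_wordCons n y)).rexp.mul
        (hh.comp (continuous_wordCons n y))).integrable_of_compactSpace
    · rw [mul_comm]; exact mul_le_mul_of_nonneg_left (hch _) (exp_pos _).le
  have hy : 0 < h y / c := div_pos (hc.trans_le (hch y)) hc
  calc log (∫ w, exp (birkhoff n f (wordCons n w y)) ∂(Measure.pi fun _ : Fin n => p))
      ≤ log (lam ^ n * (h y / c)) :=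
        log_le_log (integral_exp_pos hexp) (by rw [← mul_div_assoc, le_div_iff₀' hc]; exact hZ)
    _ = n * log lam + log (h y / c) := by
        rw [log_mul (pow_pos hlam n).ne' hy.ne', log_pow]

lemma finEnt_le_log_integral_exp_birkhoff_sub (μ : Measure (ℕ → A)) [IsProbabilityMeasure μ]
    (hμ : MeasurePreserving shift μ μ) (hf : Continuous f) {n : ℕ} {D : ℝ}
    (hD : ∀ x z : ℕ → A, (∀ k < n, x k = z k) → |birkhoff n f x - birkhoff n f z| ≤ D)
    (y : ℕ → A) :
    finEnt p μ n ≤ ((log (∫ w, exp (birkhoff n f (wordCons n w y))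
      ∂(Measure.pi fun _ : Fin n => p)) - n * ∫ x, f x ∂μ + D : ℝ) : EReal) := by
  have := Measure.isProbabilityMeasure_map (μ := μ) (measurable_proj n).aemeasurable
  have hg : Continuous fun w : Fin n → A => birkhoff n f (wordCons n w y) :=
    (continuous_birkhoff hf n).comp (continuous_wordCons n y)
  have hS : Integrable (birkhoff n f) μ := (continuous_birkhoff hf n).integrable_of_compactSpace
  have hgproj : Integrable (fun x => birkhoff n f (wordCons n (proj n x) y)) μ :=
    (hg.comp (continuous_pi fun i => continuous_apply _)).integrable_of_compactSpace
  have henergy : n * ∫ x, f x ∂μ - D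
      ≤ ∫ w, birkhoff n f (wordCons n w y) ∂(μ.map (proj n)) := by
    rw [integral_map (measurable_proj n).aemeasurable hg.aestronglyMeasurable,
      ← integral_birkhoff hμ hf.integrable_of_compactSpace n]
    have hmono := integral_mono (hS.sub (integrable_const D)) hgproj fun x =>
      show birkhoff n f x - D ≤ birkhoff n f (wordCons n (proj n x) y) by
        linarith [(abs_le.1 (hD x _ fun k hk => (wordCons_proj_of_lt hk x y).symm)).2]
    simpa [integral_sub hS (integrable_const D)] using hmono
  rw [finEnt, EReal.neg_le, ← EReal.coe_neg]
  refine le_trans (EReal.coe_le_coe_iff.2 ?_)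
    (integral_sub_log_integral_exp_le_relEnt hg.integrable_of_compactSpace
      hg.rexp.integrable_of_compactSpace)
  linarith

end Transfer

theorem statement1_general
    (p : Measure A) [IsProbabilityMeasure p]
    (α : ℝ) (hα0 : 0 < α)
    (f : (ℕ → A) → ℝ) (hf : IsHolder α f)
    (lam : ℝ) (hlam : 0 < lam)
    (h : (ℕ → A) → ℝ) (hh : IsHolder α h) (hpos : ∀ x, 0 < h x)
    (heig : ∀ x, ruelle p f h x = lam * h x)
    (μ : Measure (ℕ → A)) [IsProbabilityMeasure μ]
    (hinv : μ.map shift = μ) :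
    specEnt p μ + ((∫ x, f x ∂μ : ℝ) : EReal) ≤ ((Real.log lam : ℝ) : EReal) := by
  have hfc := hf.continuous hα0
  have hhc := hh.continuous hα0
  obtain ⟨D, hD⟩ := hf.exists_abs_birkhoff_sub_le hα0
  obtain ⟨y⟩ := nonempty_of_isProbabilityMeasure μ
  obtain ⟨x₀, -, hx₀⟩ := isCompact_univ.exists_isMinOn ⟨y, Set.mem_univ y⟩ hhc.continuousOn
  have hent : specEnt p μ ≤ ((log lam - ∫ x, f x ∂μ : ℝ) : EReal) := by
    refine limsup_inv_mul_le_of_le_affine (b := log (h y / h x₀) + D) fun n =>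
      (finEnt_le_log_integral_exp_birkhoff_sub p μ ⟨measurable_shift, hinv⟩ hfc (hD n) y).trans
        (EReal.coe_le_coe_iff.2 ?_)
    have := log_integral_exp_birkhoff_wordCons_le p hfc hhc hlam heig (hpos x₀)
      (fun x => hx₀ (Set.mem_univ x)) n y
    linarith
  calc specEnt p μ + ((∫ x, f x ∂μ : ℝ) : EReal)
      ≤ ((log lam - ∫ x, f x ∂μ : ℝ) : EReal) + ((∫ x, f x ∂μ : ℝ) : EReal) :=
        add_le_add_left hent _
    _ = ((Real.log lam : ℝ) : EReal) := by rw [← EReal.coe_add, sub_add_cancel]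

/-- If `f` is `α`-Hölder and `L_f h = λ h` with `λ > 0` and `h` a strictly
positive `α`-Hölder function, then `h^s(μ) + ∫ f dμ ≤ log λ` for every shift-invariant
Borel probability measure `μ`. -/
theorem statement1
    (p : Measure A) [IsProbabilityMeasure p]
    (hsupp : ∀ U : Set A, IsOpen U → U.Nonempty → 0 < p U)
    (α : ℝ) (hα0 : 0 < α) (hα1 : α < 1)
    (f : (ℕ → A) → ℝ) (hf : IsHolder α f)
    (lam : ℝ) (hlam : 0 < lam)
    (h : (ℕ → A) → ℝ) (hh : IsHolder α h) (hpos : ∀ x, 0 < h x)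
    (heig : ∀ x, ruelle p f h x = lam * h x)
    (μ : Measure (ℕ → A)) [IsProbabilityMeasure μ]
    (hinv : μ.map shift = μ) :
    specEnt p μ + ((∫ x, f x ∂μ : ℝ) : EReal) ≤ ((Real.log lam : ℝ) : EReal) :=
  statement1_general p α hα0 f hf lam hlam h hh hpos heig μ hinv

end Paper
end
end

section
/- For every ε > 0 there exists δ > 0 with the following property: for any probability measures μ, ν on a measurable space, any sub-σ-algebras G ⊆ F with μ ≪ ν on F, if the relative entropies satisfy H_F(μ|ν) − H_G(μ|ν) < δ (both finite), then ∫ | dμ|_F/dν|_F − dμ|_G/dν|_G | dν < ε. -/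
/-!
Write `f = dμ/dν` on `F` and `g = dμ/dν` on `G`. Since `log g` is `G`-measurable,
`∫ f log g dν = ∫ log g dμ = H_G(μ|ν)`, so `H_F(μ|ν) - H_G(μ|ν) = ∫ (f log f - f log g - f + g) dν`.
The elementary inequality `(√x - √y)² ≤ x log x - x log y - x + y` bounds the squared Hellinger
distance `∫ (√f - √g)² dν` by this difference, and Cauchy–Schwarz applied to
`|f - g| = |√f - √g| (√f + √g)` gives `(∫ |f - g| dν)² ≤ 4 (H_F(μ|ν) - H_G(μ|ν))`.
So `δ = ε² / 4` works.
-/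

open MeasureTheory
open scoped Classical

noncomputable section

/-- Relative entropy `H(μ|ν)` of two measures, with value `+∞` unless `μ ≪ ν` and the
entropy integral is finite. -/
def relEnt {X : Type*} [MeasurableSpace X] (μ ν : Measure X) : EReal :=
  if μ ≪ ν ∧ Integrable (fun x => Real.log (μ.rnDeriv ν x).toReal) μ then
    ((∫ x, Real.log (μ.rnDeriv ν x).toReal ∂μ : ℝ) : EReal)
  else ⊤

open Real Set

lemma sq_sqrt_sub_sqrt_le {x y : ℝ} (hx : 0 ≤ x) (hy : 0 ≤ y) (hxy : y = 0 → x = 0) :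
    (√x - √y) ^ 2 ≤ x * log x - x * log y - x + y := by
  rcases hy.eq_or_lt with rfl | hy
  · simp [hxy rfl]
  rcases hx.eq_or_lt with rfl | hx
  · simp [sq_sqrt hy.le]
  have hlog : log (√y / √x) ≤ √y / √x - 1 := log_le_sub_one_of_pos (by positivity)
  rw [log_div (by positivity) (by positivity), log_sqrt hy.le, log_sqrt hx.le] at hlog
  have hxy : x * (√y / √x) = √x * √y := by
    field_simp
    rw [sq_sqrt hx.le]
  nlinarith [mul_le_mul_of_nonneg_left hlog hx.le, sq_sqrt hx.le, sq_sqrt hy.le]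

section Hellinger

variable {X : Type*} [MeasurableSpace X] {ν : Measure X} {f g : X → ℝ}

lemma integral_sq_sqrt_sub_sqrt_le (hf : 0 ≤ f) (hg : 0 ≤ g)
    (hfg : ∀ᵐ x ∂ν, g x = 0 → f x = 0) (hf_int : Integrable f ν) (hg_int : Integrable g ν)
    (hflogf : Integrable (fun x ↦ f x * log (f x)) ν)
    (hflogg : Integrable (fun x ↦ f x * log (g x)) ν) :
    ∫ x, (√(f x) - √(g x)) ^ 2 ∂ν ≤
      ∫ x, f x * log (f x) ∂ν - ∫ x, f x * log (g x) ∂ν - ∫ x, f x ∂ν + ∫ x, g x ∂ν := by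
  have h_int := ((hflogf.sub hflogg).sub hf_int).add hg_int
  have h_eq : ∫ x, (f x * log (f x) - f x * log (g x) - f x + g x) ∂ν =
      ∫ x, f x * log (f x) ∂ν - ∫ x, f x * log (g x) ∂ν - ∫ x, f x ∂ν + ∫ x, g x ∂ν := by
    rw [integral_add (by exact (hflogf.sub hflogg).sub hf_int) hg_int,
      integral_sub (by exact hflogf.sub hflogg) hf_int, integral_sub hflogf hflogg]
  rw [← h_eq]
  refine integral_mono_of_nonneg (ae_of_all _ fun x ↦ sq_nonneg _) h_int ?_
  filter_upwards [hfg] with x hx using sq_sqrt_sub_sqrt_le (hf x) (hg x) hx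

lemma sq_integral_mul_le_integral_sq_mul_integral_sq {u v : X → ℝ} (hu : 0 ≤ u) (hv : 0 ≤ v)
    (hu2 : MemLp u 2 ν) (hv2 : MemLp v 2 ν) :
    (∫ x, u x * v x ∂ν) ^ 2 ≤ (∫ x, u x ^ 2 ∂ν) * ∫ x, v x ^ 2 ∂ν := by
  have h := integral_mul_le_Lp_mul_Lq_of_nonneg HolderConjugate.two_two (ae_of_all _ hu)
    (ae_of_all _ hv) (by simpa using hu2) (by simpa using hv2)
  simp only [rpow_two, ← sqrt_eq_rpow] at h
  calc (∫ x, u x * v x ∂ν) ^ 2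
      ≤ (√(∫ x, u x ^ 2 ∂ν) * √(∫ x, v x ^ 2 ∂ν)) ^ 2 :=
        pow_le_pow_left₀ (integral_nonneg fun x ↦ mul_nonneg (hu x) (hv x)) h 2
    _ = (∫ x, u x ^ 2 ∂ν) * ∫ x, v x ^ 2 ∂ν := by
        rw [mul_pow, sq_sqrt (integral_nonneg fun x ↦ sq_nonneg _),
          sq_sqrt (integral_nonneg fun x ↦ sq_nonneg _)]

lemma sq_integral_abs_sub_le (hf : 0 ≤ f) (hg : 0 ≤ g) (hf_int : Integrable f ν)
    (hg_int : Integrable g ν) :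
    (∫ x, |f x - g x| ∂ν) ^ 2 ≤
      (∫ x, (√(f x) - √(g x)) ^ 2 ∂ν) * (2 * (∫ x, f x ∂ν + ∫ x, g x ∂ν)) := by
  set u := fun x ↦ |√(f x) - √(g x)|
  set v := fun x ↦ √(f x) + √(g x)
  have hsqrt_f := fun x ↦ sq_sqrt (hf x)
  have hsqrt_g := fun x ↦ sq_sqrt (hg x)
  have hu_sq : ∀ x, u x ^ 2 ≤ 2 * f x + 2 * g x := fun x ↦ by
    nlinarith [sq_abs (√(f x) - √(g x)), sq_nonneg (√(f x) + √(g x)), hsqrt_f x, hsqrt_g x]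
  have hv_sq : ∀ x, v x ^ 2 ≤ 2 * f x + 2 * g x := fun x ↦ by
    nlinarith [sq_nonneg (√(f x) - √(g x)), hsqrt_f x, hsqrt_g x]
  have h_int : Integrable (fun x ↦ 2 * f x + 2 * g x) ν :=
    (hf_int.const_mul 2).add (hg_int.const_mul 2)
  have hu_meas : AEStronglyMeasurable u ν :=
    ((hf_int.aemeasurable.sqrt.sub hg_int.aemeasurable.sqrt).abs).aestronglyMeasurable
  have hv_meas : AEStronglyMeasurable v ν :=
    (hf_int.aemeasurable.sqrt.add hg_int.aemeasurable.sqrt).aestronglyMeasurable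
  have memLp_two {w : X → ℝ} (hw : AEStronglyMeasurable w ν)
      (hw_sq : ∀ x, w x ^ 2 ≤ 2 * f x + 2 * g x) : MemLp w 2 ν :=
    (memLp_two_iff_integrable_sq hw).2 <| h_int.mono' (hw.pow 2) <| ae_of_all _ fun x ↦ by
      simpa [abs_of_nonneg (sq_nonneg (w x))] using hw_sq x
  have h_abs : ∀ x, |f x - g x| = u x * v x := fun x ↦ by
    rw [← abs_of_nonneg (by positivity : 0 ≤ v x), ← abs_mul]
    congr 1
    linear_combination hsqrt_g x - hsqrt_f x
  calc (∫ x, |f x - g x| ∂ν) ^ 2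
      = (∫ x, u x * v x ∂ν) ^ 2 := by simp_rw [h_abs]
    _ ≤ (∫ x, u x ^ 2 ∂ν) * ∫ x, v x ^ 2 ∂ν :=
        sq_integral_mul_le_integral_sq_mul_integral_sq (fun x ↦ abs_nonneg _)
          (fun x ↦ by positivity) (memLp_two hu_meas hu_sq) (memLp_two hv_meas hv_sq)
    _ ≤ (∫ x, (√(f x) - √(g x)) ^ 2 ∂ν) * (2 * (∫ x, f x ∂ν + ∫ x, g x ∂ν)) := by
        simp only [u, sq_abs]
        gcongr
        rw [mul_add, ← integral_const_mul, ← integral_const_mul,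
          ← integral_add (hf_int.const_mul 2) (hg_int.const_mul 2)]
        exact integral_mono (memLp_two hv_meas hv_sq).integrable_sq h_int hv_sq

end Hellinger

section Trim

variable {X : Type*} {m m0 : MeasurableSpace X} (hm : m ≤ m0) {μ ν : Measure X}
  [IsFiniteMeasure μ] [IsFiniteMeasure ν]

lemma ae_rnDeriv_eq_zero_of_rnDeriv_trim_eq_zero (hμν : μ ≪ ν) :
    ∀ᵐ x ∂ν, (μ.trim hm).rnDeriv (ν.trim hm) x = 0 → μ.rnDeriv ν x = 0 := by
  set A := {x | (μ.trim hm).rnDeriv (ν.trim hm) x = 0}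
  have hA : MeasurableSet[m] A := Measure.measurable_rnDeriv _ _ (measurableSet_singleton 0)
  have hμA : μ A = 0 := by
    rw [← trim_measurableSet_eq hm hA, ← Measure.setLIntegral_rnDeriv (hμν.trim hm),
      setLIntegral_congr_fun hA fun x hx ↦ hx, lintegral_zero]
  have h_lint : ∫⁻ x in A, μ.rnDeriv ν x ∂ν = 0 :=
    le_antisymm ((Measure.setLIntegral_rnDeriv_le A).trans hμA.le) bot_le
  rw [lintegral_eq_zero_iff (Measure.measurable_rnDeriv μ ν)] at h_lint
  exact (ae_restrict_iff' (hm _ hA)).1 h_lint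

lemma integral_toReal_rnDeriv_trim (hμν : μ ≪ ν) :
    ∫ x, ((μ.trim hm).rnDeriv (ν.trim hm) x).toReal ∂ν = μ.real univ := by
  rw [integral_trim hm (Measure.measurable_rnDeriv _ _).ennreal_toReal.stronglyMeasurable,
    Measure.integral_toReal_rnDeriv (hμν.trim hm), measureReal_def, measureReal_def,
    trim_measurableSet_eq hm MeasurableSet.univ]

lemma integrable_rnDeriv_mul_log_rnDeriv_trim (hμν : μ ≪ ν)
    (h_int : Integrable (llr (μ.trim hm) (ν.trim hm)) (μ.trim hm)) :
    Integrable
      (fun x ↦ (μ.rnDeriv ν x).toReal * log ((μ.trim hm).rnDeriv (ν.trim hm) x).toReal) ν :=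
  (integrable_rnDeriv_smul_iff hμν).2 (integrable_of_integrable_trim hm h_int)

lemma integral_rnDeriv_mul_log_rnDeriv_trim (hμν : μ ≪ ν) :
    ∫ x, (μ.rnDeriv ν x).toReal * log ((μ.trim hm).rnDeriv (ν.trim hm) x).toReal ∂ν =
      ∫ x, llr (μ.trim hm) (ν.trim hm) x ∂(μ.trim hm) := by
  rw [← integral_trim hm (stronglyMeasurable_llr _ _)]
  exact integral_rnDeriv_smul hμν

theorem sq_integral_abs_rnDeriv_sub_rnDeriv_trim_le (hμν : μ ≪ ν)
    (hF : Integrable (llr μ ν) μ) (hG : Integrable (llr (μ.trim hm) (ν.trim hm)) (μ.trim hm)) :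
    (∫ x, |(μ.rnDeriv ν x).toReal - ((μ.trim hm).rnDeriv (ν.trim hm) x).toReal| ∂ν) ^ 2 ≤
      4 * μ.real univ * (∫ x, llr μ ν x ∂μ - ∫ x, llr (μ.trim hm) (ν.trim hm) x ∂(μ.trim hm)) := by
  set f := fun x ↦ (μ.rnDeriv ν x).toReal
  set g := fun x ↦ ((μ.trim hm).rnDeriv (ν.trim hm) x).toReal
  have hf_int : Integrable f ν := Measure.integrable_toReal_rnDeriv
  have hg_int : Integrable g ν := integrable_of_integrable_trim hm Measure.integrable_toReal_rnDeriv
  have hfg : ∀ᵐ x ∂ν, g x = 0 → f x = 0 := by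
    filter_upwards [ae_rnDeriv_eq_zero_of_rnDeriv_trim_eq_zero hm hμν,
      ae_of_ae_trim hm (Measure.rnDeriv_ne_top (μ.trim hm) (ν.trim hm))] with x hx hx_top hgx
    simp [f, hx ((ENNReal.toReal_eq_zero_iff _).1 hgx |>.resolve_right hx_top)]
  have h_hellinger := integral_sq_sqrt_sub_sqrt_le (fun x ↦ ENNReal.toReal_nonneg)
    (fun x ↦ ENNReal.toReal_nonneg) hfg hf_int hg_int
    ((integrable_rnDeriv_mul_log_iff hμν).2 hF)
    (integrable_rnDeriv_mul_log_rnDeriv_trim hm hμν hG)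
  rw [integral_rnDeriv_mul_log hμν, integral_rnDeriv_mul_log_rnDeriv_trim hm hμν,
    Measure.integral_toReal_rnDeriv hμν, integral_toReal_rnDeriv_trim hm hμν] at h_hellinger
  calc _ ≤ (∫ x, (√(f x) - √(g x)) ^ 2 ∂ν) * (2 * (∫ x, f x ∂ν + ∫ x, g x ∂ν)) :=
        sq_integral_abs_sub_le (fun x ↦ ENNReal.toReal_nonneg) (fun x ↦ ENNReal.toReal_nonneg)
          hf_int hg_int
    _ = 4 * μ.real univ * ∫ x, (√(f x) - √(g x)) ^ 2 ∂ν := by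
        rw [Measure.integral_toReal_rnDeriv hμν, integral_toReal_rnDeriv_trim hm hμν]
        ring
    _ ≤ _ := by
        gcongr
        linarith

end Trim

section RelEnt

variable {X : Type*} {mX : MeasurableSpace X} {μ ν : Measure X}

lemma relEnt_ne_top_iff : relEnt μ ν ≠ ⊤ ↔ μ ≪ ν ∧ Integrable (llr μ ν) μ := by
  unfold relEnt
  split_ifs with h <;> simp [h, llr_def]

lemma relEnt_eq_integral_llr (h : μ ≪ ν ∧ Integrable (llr μ ν) μ) :
    relEnt μ ν = ((∫ x, llr μ ν x ∂μ : ℝ) : EReal) :=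
  if_pos h

end RelEnt

/-- For every `ε > 0` there is `δ > 0` so that for any probability
measures `μ, ν` on a measurable space and sub-σ-algebras `G ⊆ F` with `μ ≪ ν` on `F`, if
the relative entropies `H_F(μ|ν), H_G(μ|ν)` are finite with `H_F(μ|ν) - H_G(μ|ν) < δ`,
then `∫ |dμ|_F/dν|_F - dμ|_G/dν|_G| dν < ε`. -/
theorem statement16 :
    ∀ ε : ℝ, 0 < ε → ∃ δ : ℝ, 0 < δ ∧
      ∀ (X : Type) (m0 mF mG : MeasurableSpace X) (hGF : mG ≤ mF) (hF : mF ≤ m0)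
        (μ ν : @Measure X m0),
        @IsProbabilityMeasure X m0 μ → @IsProbabilityMeasure X m0 ν →
        μ.trim hF ≪ ν.trim hF →
        @relEnt X mF (μ.trim hF) (ν.trim hF) ≠ ⊤ →
        @relEnt X mG (μ.trim (hGF.trans hF)) (ν.trim (hGF.trans hF)) ≠ ⊤ →
        @relEnt X mF (μ.trim hF) (ν.trim hF)
          < @relEnt X mG (μ.trim (hGF.trans hF)) (ν.trim (hGF.trans hF)) + ((δ : ℝ) : EReal) →
        ∫ x, |((μ.trim hF).rnDeriv (ν.trim hF) x).toReal
            - ((μ.trim (hGF.trans hF)).rnDeriv (ν.trim (hGF.trans hF)) x).toReal| ∂ν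
          < ε := by
  intro ε hε
  refine ⟨ε ^ 2 / 4, by positivity, ?_⟩
  intro X m0 mF mG hGF hF μ ν _ _ _ hF_fin hG_fin h_lt
  simp only [← trim_trim (hm₁₂ := hGF) (hm₂ := hF)] at hG_fin h_lt ⊢
  have hF_ac := relEnt_ne_top_iff.1 hF_fin
  have hG_ac := relEnt_ne_top_iff.1 hG_fin
  rw [relEnt_eq_integral_llr hF_ac, relEnt_eq_integral_llr hG_ac, ← EReal.coe_add,
    EReal.coe_lt_coe_iff] at h_lt
  have h_sq := sq_integral_abs_rnDeriv_sub_rnDeriv_trim_le hGF hF_ac.1 hF_ac.2 hG_ac.2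
  rw [measureReal_def, trim_measurableSet_eq hF MeasurableSet.univ, measure_univ,
    ENNReal.toReal_one] at h_sq
  rw [integral_trim hF (by fun_prop)]
  refine lt_of_pow_lt_pow_left₀ 2 hε.le ?_
  linarith
end
end
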